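/- arXiv:1404.6003 — 6 statements merged into one kernel-verified Lean document; each statement's English description precedes it below -/
import Mathlib

section
/- Under the parameter choices c = (p₀+p₁-1)/2, d = 1/2 - (3/2)(p₁-p₀)² + 2α|p₀-p₁|, ρ = β/(2(p₁-p₀)² - 4α|p₀-p₁|) with β > 0 and 0 ≤ α < |p₁-p₀|/2, the truthful expected payment satisfies B_{c,d,ρ}(p_b, p_b) = β + 2ρα|p₀-p₁| for each b ∈ {0,1}. -/
noncomputable def B (p q : ℝ) : ℝ := 1 - 2*(p - 2*p*q + q^2)

noncomputable def Bm (c d ρ p q : ℝ) : ℝ := ρ * (B (p - c) (q - c) - d)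

theorem stmt_9 (p₀ p₁ α β : ℝ) (hne : p₀ ≠ p₁) (hβ : 0 < β)
    (hα₀ : 0 ≤ α) (hα : α < |p₁ - p₀| / 2)
    (c d ρ : ℝ) (hc : c = (p₀ + p₁ - 1)/2)
    (hd : d = 1/2 - (3/2)*(p₁ - p₀)^2 + 2*α*|p₀ - p₁|)
    (hρ : ρ = β / (2*(p₁ - p₀)^2 - 4*α*|p₀ - p₁|)) :
    ∀ b : Bool, Bm c d ρ (if b then p₁ else p₀) (if b then p₁ else p₀)
      = β + 2*ρ*α*|p₀ - p₁| := by
  have habs : |p₀ - p₁| = |p₁ - p₀| := abs_sub_comm _ _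
  have hsq : |p₁ - p₀|^2 = (p₁ - p₀)^2 := sq_abs _
  have hpos : 0 < |p₁ - p₀| := abs_pos.mpr (sub_ne_zero.mpr (Ne.symm hne))
  have hD : 0 < 2*(p₁ - p₀)^2 - 4*α*|p₀ - p₁| := by
    rw [habs]
    nlinarith [hsq, hpos]
  have hDne : 2*(p₁ - p₀)^2 - 4*α*|p₀ - p₁| ≠ 0 := ne_of_gt hD
  intro b
  cases b <;> simp only [if_true, if_false, Bool.false_eq_true] <;>
    · subst hc hd hρ
      simp only [Bm, B]
      field_simp
      rw [habs]
      nlinarith [hsq]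
end

section
/- Under the parameter choices c = (p₀+p₁-1)/2, d = 1/2 - (3/2)(p₁-p₀)² + 2α|p₀-p₁|, ρ = β/(2(p₁-p₀)² - 4α|p₀-p₁|) with β > 0 and 0 ≤ α < |p₁-p₀|/2, the lying expected payment satisfies B_{c,d,ρ}(p_b, p_{1-b}) = -2ρα|p₀-p₁| for each b ∈ {0,1}. -/
theorem stmt_10 (p₀ p₁ α β : ℝ) (hne : p₀ ≠ p₁) (hβ : 0 < β)
    (hα₀ : 0 ≤ α) (hα : α < |p₁ - p₀| / 2)
    (c d ρ : ℝ) (hc : c = (p₀ + p₁ - 1)/2)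
    (hd : d = 1/2 - (3/2)*(p₁ - p₀)^2 + 2*α*|p₀ - p₁|)
    (hρ : ρ = β / (2*(p₁ - p₀)^2 - 4*α*|p₀ - p₁|)) :
    ∀ b : Bool, Bm c d ρ (if b then p₁ else p₀) (if b then p₀ else p₁)
      = -(2*ρ*α*|p₀ - p₁|) := by
  intro b
  have h : ∀ p q : ℝ, p + q = p₀ + p₁ → (p - q)^2 = (p₁ - p₀)^2 →
      Bm c d ρ p q = -(2*ρ*α*|p₀ - p₁|) := by
    intro p q h1 h2
    simp only [Bm, B, hc, hd]
    have : p₁ - p₀ = (p - q) ∨ p₁ - p₀ = -(p - q) := sq_eq_sq_iff_eq_or_eq_neg.mp h2.symm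
    rcases this with h3 | h3
    · have e0 : p₀ = q := by linarith
      have e1 : p₁ = p := by linarith
      subst e0; subst e1; ring
    · have e0 : p₀ = p := by linarith
      have e1 : p₁ = q := by linarith
      subst e0; subst e1; rw [abs_sub_comm]; ring
  cases b <;> simp only [Bool.false_eq_true, if_true, if_false] <;>
    apply h <;> ring
end

section
/- (Robustness of lying bound.) With c, d, ρ chosen as in Proposition 3 (β > 0, 0 ≤ α < |p₁-p₀|/2), for each b ∈ {0,1} and any real p' with |p' - p_b| < α, it holds that B_{c,d,ρ}(p', p_{1-b}) ≤ 0. -/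
theorem stmt_11 (p₀ p₁ α β : ℝ) (hne : p₀ ≠ p₁) (hβ : 0 < β)
    (hα₀ : 0 ≤ α) (hα : α < |p₁ - p₀| / 2)
    (c d ρ : ℝ) (hc : c = (p₀ + p₁ - 1)/2)
    (hd : d = 1/2 - (3/2)*(p₁ - p₀)^2 + 2*α*|p₀ - p₁|)
    (hρ : ρ = β / (2*(p₁ - p₀)^2 - 4*α*|p₀ - p₁|)) :
    ∀ b : Bool, ∀ p' : ℝ, |p' - (if b then p₁ else p₀)| < α →
      Bm c d ρ p' (if b then p₀ else p₁) ≤ 0 := by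
  intro b p' h
  have hAeq : |p₀ - p₁| = |p₁ - p₀| := abs_sub_comm _ _
  have hApos : 0 < |p₁ - p₀| := abs_pos.mpr (sub_ne_zero.mpr (Ne.symm hne))
  have hsq : |p₁ - p₀| ^ 2 = (p₁ - p₀) ^ 2 := sq_abs _
  have hρ0 : 0 ≤ ρ := by
    rw [hρ]
    apply div_nonneg hβ.le
    nlinarith [hApos, hsq]
  apply mul_nonpos_of_nonneg_of_nonpos hρ0
  rcases abs_cases (p₁ - p₀) with ⟨hA, _⟩ | ⟨hA, _⟩ <;>
  · rw [hAeq, hA] at hd; rw [hA] at hα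
    cases b <;> simp only [Bool.false_eq_true, if_true, if_false] at h ⊢ <;>
    · rw [abs_lt] at h
      unfold B
      subst hc hd
      nlinarith [h.1, h.2]
end

section
/- (Robustness of truth-telling bound.) With c, d, ρ chosen as in Proposition 3 (β > 0, 0 ≤ α < |p₁-p₀|/2), for each b ∈ {0,1} and any real p' with |p' - p_b| < α, it holds that B_{c,d,ρ}(p', p_b) ≥ β. -/
theorem stmt_12 (p₀ p₁ α β : ℝ) (hne : p₀ ≠ p₁) (hβ : 0 < β)
    (hα₀ : 0 ≤ α) (hα : α < |p₁ - p₀| / 2)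
    (c d ρ : ℝ) (hc : c = (p₀ + p₁ - 1)/2)
    (hd : d = 1/2 - (3/2)*(p₁ - p₀)^2 + 2*α*|p₀ - p₁|)
    (hρ : ρ = β / (2*(p₁ - p₀)^2 - 4*α*|p₀ - p₁|)) :
    ∀ b : Bool, ∀ p' : ℝ, |p' - (if b then p₁ else p₀)| < α →
      β ≤ Bm c d ρ p' (if b then p₁ else p₀) := by
  intro b p' h
  have habs : |p₀ - p₁| = |p₁ - p₀| := abs_sub_comm _ _
  have hδ : 0 < |p₁ - p₀| := abs_pos.2 (sub_ne_zero.2 (Ne.symm hne))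
  have hsq : |p₁ - p₀| ^ 2 = (p₁ - p₀) ^ 2 := sq_abs _
  have hD : 0 < 2*(p₁ - p₀)^2 - 4*α*|p₀ - p₁| := by
    rw [habs]
    nlinarith [hδ]
  have hq : ∃ q : ℝ, (if b then p₁ else p₀) = q ∧ (q = p₀ ∨ q = p₁) := by
    cases b <;> simp
  obtain ⟨q, hq, hcase⟩ := hq
  rw [hq] at h ⊢
  have he : |(p' - q) * (p₁ - p₀)| ≤ α * |p₁ - p₀| := by
    rw [abs_mul]
    exact mul_le_mul_of_nonneg_right h.le (abs_nonneg _)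
  have he1 : -(α * |p₁ - p₀|) ≤ (p' - q) * (p₁ - p₀) := neg_le_of_abs_le he
  have he2 : (p' - q) * (p₁ - p₀) ≤ α * |p₁ - p₀| := le_of_abs_le he
  have hE : 2*(p₁ - p₀)^2 - 4*α*|p₀ - p₁| ≤ B (p' - c) (q - c) - d := by
    unfold B
    rw [habs] at hd ⊢
    subst hc hd
    rcases hcase with h' | h' <;> subst h'
    · nlinarith [he2]
    · nlinarith [he1]
  show β ≤ ρ * (B (p' - c) (q - c) - d)
  rw [hρ, div_mul_eq_mul_div, le_div_iff₀ hD]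
  nlinarith [mul_le_mul_of_nonneg_left hE hβ.le]
end

section
/- (Upper bound on truthful payment.) With c, d, ρ chosen as in Proposition 3 (β > 0, 0 ≤ α < |p₁-p₀|/2), for any α' > 0, each b ∈ {0,1}, and any real p' with |p' - p_b| < α', it holds that B_{c,d,ρ}(p', p_b) ≤ β + 2ρ(α + α')|p₀ - p₁|. -/
theorem stmt_13 (p₀ p₁ α β : ℝ) (hne : p₀ ≠ p₁) (hβ : 0 < β)
    (hα₀ : 0 ≤ α) (hα : α < |p₁ - p₀| / 2)
    (c d ρ : ℝ) (hc : c = (p₀ + p₁ - 1)/2)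
    (hd : d = 1/2 - (3/2)*(p₁ - p₀)^2 + 2*α*|p₀ - p₁|)
    (hρ : ρ = β / (2*(p₁ - p₀)^2 - 4*α*|p₀ - p₁|)) :
    ∀ α' : ℝ, 0 < α' → ∀ b : Bool, ∀ p' : ℝ, |p' - (if b then p₁ else p₀)| < α' →
      Bm c d ρ p' (if b then p₁ else p₀) ≤ β + 2*ρ*(α + α')*|p₀ - p₁| := by
  intro α' hα' b p' hp'
  have hAcomm : |p₀ - p₁| = |p₁ - p₀| := abs_sub_comm _ _
  have hApos : 0 < |p₁ - p₀| := abs_pos.2 (sub_ne_zero.2 (Ne.symm hne))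
  have hA2 : |p₁ - p₀|^2 = (p₁ - p₀)^2 := sq_abs _
  have hD : 0 < 2*(p₁ - p₀)^2 - 4*α*|p₀ - p₁| := by
    rw [hAcomm, ← hA2]; nlinarith
  have hρpos : 0 < ρ := by rw [hρ]; exact div_pos hβ hD
  have hβeq : ρ * (2*(p₁ - p₀)^2 - 4*α*|p₀ - p₁|) = β := by
    rw [hρ]; field_simp
  have hcore : B (p' - c) ((if b then p₁ else p₀) - c) - d ≤
      (2*(p₁ - p₀)^2 - 4*α*|p₀ - p₁|) + 2*(α + α')*|p₀ - p₁| := by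
    cases b with
    | true =>
      simp only [if_true] at hp' ⊢
      have h1 : (p' - p₁)*(p₁ - p₀) ≤ α' * |p₁ - p₀| := by
        calc (p' - p₁)*(p₁ - p₀) ≤ |(p' - p₁)*(p₁ - p₀)| := le_abs_self _
          _ = |p' - p₁| * |p₁ - p₀| := abs_mul _ _
          _ ≤ α' * |p₁ - p₀| := by
              exact mul_le_mul_of_nonneg_right hp'.le (abs_nonneg _)
      simp only [B, hc, hd, hAcomm]
      nlinarith [h1]
    | false =>
      simp only [Bool.false_eq_true, if_false] at hp' ⊢
      have h1 : (p' - p₀)*(p₀ - p₁) ≤ α' * |p₁ - p₀| := by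
        calc (p' - p₀)*(p₀ - p₁) ≤ |(p' - p₀)*(p₀ - p₁)| := le_abs_self _
          _ = |p' - p₀| * |p₀ - p₁| := abs_mul _ _
          _ ≤ α' * |p₁ - p₀| := by
              rw [hAcomm]
              exact mul_le_mul_of_nonneg_right hp'.le (abs_nonneg _)
      simp only [B, hc, hd, hAcomm]
      nlinarith [h1]
  calc Bm c d ρ p' (if b then p₁ else p₀)
      = ρ * (B (p' - c) ((if b then p₁ else p₀) - c) - d) := rfl
    _ ≤ ρ * ((2*(p₁ - p₀)^2 - 4*α*|p₀ - p₁|) + 2*(α + α')*|p₀ - p₁|) :=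
        mul_le_mul_of_nonneg_left hcore hρpos.le
    _ = ρ * (2*(p₁ - p₀)^2 - 4*α*|p₀ - p₁|) + 2*ρ*(α + α')*|p₀ - p₁| := by ring
    _ = β + 2*ρ*(α + α')*|p₀ - p₁| := by rw [hβeq]
end

section
/- (Billboard Lemma.) If M : T^n → O is ε-differentially private (with respect to changing one coordinate of the input), and f : T × O → O' is any function, then the mechanism M' that on input t outputs (o, (f(t₁,o), ..., f(tₙ,o))) with o = M(t) is ε-jointly differentially private: for every i, every pair of inputs t, t' differing only in coordinate i, and every measurable set S of outcomes of the components observable to parties other than i (namely o together with the payments f(t_j, o) for j ≠ i), Pr[M'(t)_{-i} ∈ S] ≤ e^ε Pr[M'(t')_{-i} ∈ S]. -/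
open MeasureTheory

theorem stmt_16 {T O O' : Type} [MeasurableSpace O] [MeasurableSpace O']
    (n : ℕ) (ε : ℝ) (M : (Fin n → T) → Measure O)
    (hDP : ∀ t t' : Fin n → T, ∀ i : Fin n, (∀ j, j ≠ i → t j = t' j) →
      ∀ S : Set O, MeasurableSet S → M t S ≤ ENNReal.ofReal (Real.exp ε) * M t' S)
    (f : T → O → O')
    (i : Fin n) (t t' : Fin n → T) (hneighbor : ∀ j, j ≠ i → t j = t' j)
    (hmeas : ∀ u : Fin n → T,
      Measurable (fun o : O => (o, fun j : {j : Fin n // j ≠ i} => f (u j.1) o)))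
    (S : Set (O × ({j : Fin n // j ≠ i} → O'))) (hS : MeasurableSet S) :
    (M t).map (fun o : O => (o, fun j : {j : Fin n // j ≠ i} => f (t j.1) o)) S
      ≤ ENNReal.ofReal (Real.exp ε) *
        (M t').map (fun o : O => (o, fun j : {j : Fin n // j ≠ i} => f (t' j.1) o)) S := by
  have hfun : (fun o : O => (o, fun j : {j : Fin n // j ≠ i} => f (t j.1) o))
      = (fun o : O => (o, fun j : {j : Fin n // j ≠ i} => f (t' j.1) o)) := by
    funext o
    simp only [Prod.mk.injEq, true_and]
    funext j
    rw [hneighbor j.1 j.2]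
  rw [hfun, Measure.map_apply (hmeas t') hS, Measure.map_apply (hmeas t') hS]
  exact hDP t t' i hneighbor _ (hS.preimage (hmeas t'))
end
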